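/- Let n ≥ 2 be an integer, α > −1 a real number, and ξ ∈ {−n+1, …, −1}. Then the star-subalgebra of M_{n+ξ}(ℂ) (with conjugate-transpose as star) generated over ℂ by the n+ξ matrices γ(g_{n−1})_ξ, γ(g_n)_ξ, …, γ(g_{2n−2+ξ})_ξ is all of M_{n+ξ}(ℂ). -/

import Mathlib

open MeasureTheory Filter
open scoped ENNReal

noncomputable section

/-- Generalized binomial coefficient `x(x-1)⋯(x-j+1)/j!`. -/
def gbinom (x : ℝ) (j : ℕ) : ℝ :=
  (∏ i ∈ Finset.range j, (x - i)) / (Nat.factorial j)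

/-- Shifted Jacobi polynomial `Q_m^{(α,β)}` on `[0,1]`:
`Q_m^{(α,β)}(t) = Σ_{k=0}^m binom(α+β+m+k,k)·binom(β+m,m-k)·(-1)^{m-k}·t^k`. -/
def jacQ (α β : ℝ) (m : ℕ) (t : ℝ) : ℝ :=
  ∑ k ∈ Finset.range (m + 1),
    gbinom (α + β + m + k) k * gbinom (β + m) (m - k) * (-1 : ℝ) ^ (m - k) * t ^ k

/-- Normalizing coefficient
`κ(α,β,m) = sqrt((2m+α+β+1)·Γ(m+α+β+1)·m!/(Γ(m+α+1)·Γ(m+β+1)))`. -/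
def jacCoef (α β : ℝ) (m : ℕ) : ℝ :=
  Real.sqrt ((2 * m + α + β + 1) * Real.Gamma (m + α + β + 1) * (Nat.factorial m) /
    (Real.Gamma (m + α + 1) * Real.Gamma (m + β + 1)))

/-- Jacobi function `J_m^{(α,β)}(t) = κ(α,β,m)·(1-t)^{α/2}·t^{β/2}·Q_m^{(α,β)}(t)`. -/
def jacJ (α β : ℝ) (m : ℕ) (t : ℝ) : ℝ :=
  jacCoef α β m * (1 - t) ^ (α / 2) * t ^ (β / 2) * jacQ α β m t

/-- `dd n ξ = min(n+ξ, n)` (for `ξ ≥ 1-n`), written as a total function into `ℕ`. -/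
def dd (n : ℕ) (ξ : ℤ) : ℕ := n - (-ξ).toNat

lemma dd_le (n : ℕ) (ξ : ℤ) : dd n ξ ≤ n := Nat.sub_le _ _

/-- The set `Ω_n = {ξ ∈ ℤ : ξ ≥ -n+1}` as a subtype. -/
abbrev Om (n : ℕ) : Type := {ξ : ℤ // 1 - (n : ℤ) ≤ ξ}

/-- The entry `γ(a)_{ξ,j,k} = κ(α,|ξ|,j)·κ(α,|ξ|,k)·
∫₀¹ a(√t)·Q_j^{(α,|ξ|)}(t)·Q_k^{(α,|ξ|)}(t)·(1-t)^α·t^{|ξ|} dt`. -/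
def gammaEnt (α : ℝ) (a : ℝ → ℂ) (ξ : ℤ) (j k : ℕ) : ℂ :=
  ((jacCoef α ξ.natAbs j * jacCoef α ξ.natAbs k : ℝ) : ℂ) *
    ∫ t in (0:ℝ)..1, a (Real.sqrt t) *
      ((jacQ α ξ.natAbs j t * jacQ α ξ.natAbs k t * (1 - t) ^ α * t ^ (ξ.natAbs) : ℝ) : ℂ)

/-- The matrix `γ(a)_ξ ∈ M_{d_ξ}(ℂ)`. -/
def gammaMat (n : ℕ) (α : ℝ) (a : ℝ → ℂ) (ξ : ℤ) :
    Matrix (Fin (dd n ξ)) (Fin (dd n ξ)) ℂ :=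
  Matrix.of fun j k => gammaEnt α a ξ (j : ℕ) (k : ℕ)

/-- Bounded measurable functions on `[0,1)` having a finite limit at `1⁻`. -/
def LinfLim (a : ℝ → ℂ) : Prop :=
  Measurable a ∧ (∃ C : ℝ, ∀ r ∈ Set.Ico (0:ℝ) 1, ‖a r‖ ≤ C) ∧
    ∃ ω : ℂ, Tendsto a (nhdsWithin 1 (Set.Ico (0:ℝ) 1)) (nhds ω)

/-- The generating symbol `g_p(t) = Q_p^{(α,0)}(t²)`, as a complex-valued function. -/
def gSym (α : ℝ) (p : ℕ) (t : ℝ) : ℂ := ((jacQ α 0 p (t ^ 2) : ℝ) : ℂ)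

/-- `⟨A w, w⟩ = Σ_{j,k} conj(w_j)·A_{j,k}·w_k`. -/
def innerForm {d : ℕ} (A : Matrix (Fin d) (Fin d) ℂ) (w : Fin d → ℂ) : ℂ :=
  ∑ j : Fin d, ∑ k : Fin d, (starRingEnd ℂ) (w j) * A j k * w k

/-!
By the Beta integral `∫₀¹ t^m (1-t)^α dt = m! / ((α+1)⋯(α+m+1))`, orthogonality of
`Q_p^{(α,0)}` to `t^m`, `m < p`, for the weight `(1-t)^α` is the vanishing of a `p`-th finite
difference of a polynomial of degree `p - 1`. The entry `γ(g_p)_{ξ,j,k}` integrates `Q_p^{(α,0)}`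
against `Q_j Q_k t^{|ξ|}`, a polynomial of degree `j + k + |ξ|` with positive leading coefficient,
so it vanishes for `j + k + |ξ| < p` and, for `j + k + |ξ| = p`, is a positive multiple of
`∫ Q_p^{(α,0)}(t) t^p (1-t)^α dt`, itself a positive multiple of `∫ Q_p^{(α,0)}(t)² (1-t)^α dt`.

With `d = n + ξ` and `p = n - 1 + q`, the `q`-th generator thus vanishes above the antidiagonal
`j + k = d - 1 + q` and has no zero on it. The last generator is a multiple of the corner unit
`E_{d-1,d-1}`; multiplying the `q`-th generator by it yields `E_{q,d-1}` modulo the units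
`E_{j,d-1}`, `j > q`, and adjoints and products then give every `E_{jk}` with `j, k ≥ q`.
-/

open Finset Polynomial
open scoped Nat

lemma gbinom_zero (x : ℝ) : gbinom x 0 = 1 := by simp [gbinom]

lemma gbinom_pos {x : ℝ} {j : ℕ} (hx : (j : ℝ) - 1 < x) : 0 < gbinom x j := by
  refine div_pos (prod_pos fun i hi => ?_) (by positivity)
  have : (i : ℝ) + 1 ≤ j := by exact_mod_cast mem_range.mp hi
  linarith

lemma gbinom_natCast {p j : ℕ} (h : j ≤ p) : gbinom p j = p.choose j := by
  have hprod : ∏ i ∈ range j, ((p : ℝ) - i) = p.descFactorial j := by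
    rw [Nat.descFactorial_eq_prod_range, Nat.cast_prod]
    exact prod_congr rfl fun i hi => by rw [Nat.cast_sub (by grind)]
  rw [gbinom, hprod, Nat.descFactorial_eq_factorial_mul_choose, Nat.cast_mul,
    mul_div_cancel_left₀ _ (by positivity)]

lemma gbinom_add_self (x : ℝ) (k : ℕ) :
    gbinom (x + k) k = (∏ i ∈ range k, (x + 1 + i)) / k ! := by
  rw [gbinom, ← prod_range_reflect]
  congr 1
  refine prod_congr rfl fun i hi => ?_
  have hi : i < k := mem_range.mp hi
  rw [Nat.cast_sub (by omega), Nat.cast_sub (by omega)]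
  push_cast
  ring

lemma integral_pow_mul_one_sub_rpow {α : ℝ} (hα : -1 < α) (m : ℕ) :
    ∫ t in (0 : ℝ)..1, t ^ m * (1 - t) ^ α = m ! / ∏ j ∈ range (m + 1), (α + 1 + j) := by
  have hre : 0 < ((α : ℂ) + 1).re := by simp; linarith
  have hbeta := Complex.betaIntegral_eval_nat_add_one_right hre m
  rw [← Complex.betaIntegral_symm, Complex.betaIntegral] at hbeta
  rw [← Complex.ofReal_inj, intervalIntegral.integral_ofReal.symm]
  push_cast
  rw [← hbeta]
  refine intervalIntegral.integral_congr fun t ht => ?_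
  have ht1 : 0 ≤ 1 - t := by
    rw [Set.uIcc_of_le zero_le_one] at ht
    linarith [ht.2]
  simp only [add_sub_cancel_right, Complex.cpow_natCast]
  rw [← Complex.ofReal_one, ← Complex.ofReal_sub, Complex.ofReal_cpow ht1]

lemma sum_jacobi_coeff_mul_beta_moment_eq_zero {α : ℝ} (hα : -1 < α) {p m : ℕ} (hm : m < p) :
    ∑ k ∈ range (p + 1), gbinom (α + p + k) k * gbinom p (p - k) * (-1) ^ (p - k) *
      ((m + k)! / ∏ j ∈ range (m + k + 1), (α + 1 + j)) = 0 := by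
  have hpos : ∀ j : ℕ, 0 < α + 1 + j := fun j => by linarith [(Nat.cast_nonneg j : (0 : ℝ) ≤ j)]
  set D := ∏ j ∈ range p, (α + 1 + j)
  have hD : 0 < D := prod_pos fun j _ => hpos j
  -- After multiplication by `D`, the `k`-th term is `(-1)^(p-k) C(p,k) P(k)` with `deg P = p - 1`,
  -- so the sum is a `p`-th forward difference of `P`.
  set P : ℝ[X] := (∏ i ∈ range m, (X + C ((i : ℝ) + 1))) *
    ∏ i ∈ range (p - m - 1), (X + C (α + m + 2 + i))
  have hPdeg : P.natDegree < p := by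
    have hmonic : ∀ c : ℝ, (X + C c).Monic := monic_X_add_C
    rw [natDegree_mul (monic_prod_of_monic _ _ fun i _ => hmonic _).ne_zero
      (monic_prod_of_monic _ _ fun i _ => hmonic _).ne_zero,
      natDegree_prod_of_monic _ _ fun i _ => hmonic _,
      natDegree_prod_of_monic _ _ fun i _ => hmonic _]
    simp only [natDegree_X_add_C, sum_const, card_range, smul_eq_mul, mul_one]
    omega
  have hdiff := fwdDiff_iter_eq_sum_shift (1 : ℝ) P.eval p 0
  rw [Polynomial.fwdDiff_iter_eq_zero_of_degree_lt hPdeg, Pi.zero_apply] at hdiff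
  refine (mul_eq_zero.mp ?_).resolve_right hD.ne'
  rw [sum_mul, hdiff]
  refine sum_congr rfl fun k hk => ?_
  have hk : k ≤ p := Nat.lt_succ_iff.mp (mem_range.mp hk)
  have hprod : (∏ i ∈ range k, (p + α + 1 + i)) * D =
      (∏ j ∈ range (m + k + 1), (α + 1 + j)) * ∏ i ∈ range (p - m - 1), (α + m + k + 2 + i) := by
    have h1 := prod_range_add (fun j : ℕ => α + 1 + j) p k
    have h2 := prod_range_add (fun j : ℕ => α + 1 + j) (m + k + 1) (p - m - 1)
    rw [show m + k + 1 + (p - m - 1) = p + k by omega, h1] at h2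
    push_cast at h2
    rw [mul_comm]
    convert h2 using 3 <;> ring
  have hfact : ((m + k)! : ℝ) = k ! * ∏ i ∈ range m, ((k : ℝ) + i + 1) := by
    rw [add_comm m k, ← Nat.factorial_mul_ascFactorial, Nat.ascFactorial_eq_prod_range]
    push_cast
    ring_nf
  have hP : P.eval (0 + k • (1 : ℝ)) =
      (∏ i ∈ range m, ((k : ℝ) + i + 1)) * ∏ i ∈ range (p - m - 1), (α + m + k + 2 + i) := by
    simp only [P, eval_mul, eval_prod, eval_add, eval_X, eval_C, nsmul_eq_mul, mul_one, zero_add]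
    congr 1 <;> refine prod_congr rfl fun i _ => by ring
  rw [add_comm α, gbinom_add_self, gbinom_natCast (Nat.sub_le p k), Nat.choose_symm hk, hP,
    hfact]
  have hden : ∏ j ∈ range (m + k + 1), (α + 1 + j) ≠ 0 := (prod_pos fun j _ => hpos j).ne'
  field_simp
  linear_combination ((p.choose k : ℝ) * (-1) ^ (p - k) * ∏ i ∈ range m, ((k : ℝ) + i + 1)) * hprod

def jacobiPoly (α β : ℝ) (m : ℕ) : ℝ[X] :=
  ∑ k ∈ range (m + 1),
    C (gbinom (α + β + m + k) k * gbinom (β + m) (m - k) * (-1) ^ (m - k)) * X ^ k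

@[simp]
lemma eval_jacobiPoly (α β : ℝ) (m : ℕ) (t : ℝ) : (jacobiPoly α β m).eval t = jacQ α β m t := by
  simp [jacobiPoly, jacQ, eval_finsetSum]

lemma coeff_jacobiPoly_self (α β : ℝ) (m : ℕ) :
    (jacobiPoly α β m).coeff m = gbinom (α + β + m + m) m := by
  rw [jacobiPoly, finsetSum_coeff, sum_eq_single m]
  · simp [gbinom_zero]
  · intro k _ hk
    rw [coeff_C_mul_X_pow, if_neg (Ne.symm hk)]
  · simp

lemma coeff_jacobiPoly_self_pos {α β : ℝ} (hαβ : -1 < α + β) (m : ℕ) :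
    0 < (jacobiPoly α β m).coeff m := by
  rw [coeff_jacobiPoly_self]
  exact gbinom_pos (by linarith [(Nat.cast_nonneg m : (0 : ℝ) ≤ m)])

lemma natDegree_jacobiPoly {α β : ℝ} (hαβ : -1 < α + β) (m : ℕ) :
    (jacobiPoly α β m).natDegree = m :=
  natDegree_eq_of_le_of_coeff_ne_zero
    (natDegree_sum_le_of_forall_le _ _ fun k hk =>
      (natDegree_C_mul_X_pow_le _ k).trans (Nat.lt_succ_iff.mp (mem_range.mp hk)))
    (coeff_jacobiPoly_self_pos hαβ m).ne'

lemma leadingCoeff_jacobiPoly_pos {α β : ℝ} (hαβ : -1 < α + β) (m : ℕ) :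
    0 < (jacobiPoly α β m).leadingCoeff := by
  rw [leadingCoeff, natDegree_jacobiPoly hαβ]
  exact coeff_jacobiPoly_self_pos hαβ m

lemma continuous_jacQ (α β : ℝ) (m : ℕ) : Continuous (jacQ α β m) := by
  simpa using (jacobiPoly α β m).continuous

lemma intervalIntegrable_mul_one_sub_rpow {α : ℝ} (hα : -1 < α) {g : ℝ → ℝ}
    (hg : Continuous g) : IntervalIntegrable (fun t => g t * (1 - t) ^ α) volume 0 1 := by
  have hweight : IntervalIntegrable (fun t : ℝ => (1 - t) ^ α) volume 0 1 := by
    have h := (intervalIntegral.intervalIntegrable_rpow' hα (a := 0) (b := 1)).comp_sub_left 1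
    norm_num at h
    exact h.symm
  exact hweight.continuousOn_mul hg.continuousOn

lemma integral_sum_mul_one_sub_rpow {ι : Type*} {α : ℝ} (hα : -1 < α) (s : Finset ι)
    (c : ι → ℝ) {f : ι → ℝ → ℝ} (hf : ∀ i, Continuous (f i)) :
    ∫ t in (0 : ℝ)..1, (∑ i ∈ s, c i * f i t) * (1 - t) ^ α =
      ∑ i ∈ s, c i * ∫ t in (0 : ℝ)..1, f i t * (1 - t) ^ α := by
  simp_rw [sum_mul, mul_assoc]
  rw [intervalIntegral.integral_finsetSum fun i _ =>
    (intervalIntegrable_mul_one_sub_rpow hα (hf i)).const_mul (c i)]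
  simp_rw [intervalIntegral.integral_const_mul]

lemma integral_jacQ_mul_pow_eq_zero {α : ℝ} (hα : -1 < α) {p m : ℕ} (hm : m < p) :
    ∫ t in (0 : ℝ)..1, jacQ α 0 p t * t ^ m * (1 - t) ^ α = 0 := by
  have hexpand : ∀ t, jacQ α 0 p t * t ^ m = ∑ k ∈ range (p + 1),
      gbinom (α + p + k) k * gbinom p (p - k) * (-1) ^ (p - k) * t ^ (m + k) := by
    intro t
    simp only [jacQ, add_zero, zero_add, sum_mul, pow_add]
    exact sum_congr rfl fun k _ => by ring
  simp_rw [hexpand]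
  rw [integral_sum_mul_one_sub_rpow hα _ _ fun k => continuous_pow (m + k)]
  simp_rw [integral_pow_mul_one_sub_rpow hα]
  exact sum_jacobi_coeff_mul_beta_moment_eq_zero hα hm

lemma integral_jacQ_mul_eval {α : ℝ} (hα : -1 < α) (p : ℕ) (R : ℝ[X]) :
    ∫ t in (0 : ℝ)..1, jacQ α 0 p t * R.eval t * (1 - t) ^ α =
      ∑ i ∈ range (R.natDegree + 1),
        R.coeff i * ∫ t in (0 : ℝ)..1, jacQ α 0 p t * t ^ i * (1 - t) ^ α := by
  have hexpand : ∀ t, jacQ α 0 p t * R.eval t =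
      ∑ i ∈ range (R.natDegree + 1), R.coeff i * (jacQ α 0 p t * t ^ i) := by
    intro t
    rw [eval_eq_sum_range, mul_sum]
    exact sum_congr rfl fun i _ => by ring
  simp_rw [hexpand]
  exact integral_sum_mul_one_sub_rpow hα _ _ fun i => (continuous_jacQ α 0 p).mul (continuous_pow i)

lemma integral_jacQ_mul_eval_eq_zero {α : ℝ} (hα : -1 < α) {p : ℕ} {R : ℝ[X]}
    (hR : R.natDegree < p) : ∫ t in (0 : ℝ)..1, jacQ α 0 p t * R.eval t * (1 - t) ^ α = 0 := by
  rw [integral_jacQ_mul_eval hα]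
  exact sum_eq_zero fun i hi => by
    rw [integral_jacQ_mul_pow_eq_zero hα (by grind), mul_zero]

lemma integral_jacQ_mul_eval_of_natDegree_eq {α : ℝ} (hα : -1 < α) {p : ℕ} {R : ℝ[X]}
    (hR : R.natDegree = p) :
    ∫ t in (0 : ℝ)..1, jacQ α 0 p t * R.eval t * (1 - t) ^ α =
      R.leadingCoeff * ∫ t in (0 : ℝ)..1, jacQ α 0 p t * t ^ p * (1 - t) ^ α := by
  rw [integral_jacQ_mul_eval hα, sum_range_succ, sum_eq_zero fun i hi => by
    rw [integral_jacQ_mul_pow_eq_zero hα (by grind), mul_zero], zero_add, hR, leadingCoeff, hR]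

lemma integral_eval_sq_mul_one_sub_rpow_pos {α : ℝ} (hα : -1 < α) {P : ℝ[X]} (hP : P ≠ 0) :
    0 < ∫ t in (0 : ℝ)..1, P.eval t ^ 2 * (1 - t) ^ α := by
  have hsupport : Set.Ioo (0 : ℝ) 1 \ {t | P.IsRoot t} ⊆
      Function.support (fun t => P.eval t ^ 2 * (1 - t) ^ α) ∩ Set.Ioc 0 1 := by
    rintro t ⟨ht, hroot⟩
    refine ⟨mul_ne_zero (pow_ne_zero 2 hroot) (Real.rpow_pos_of_pos ?_ α).ne',
      Set.Ioo_subset_Ioc_self ht⟩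
    linarith [ht.2]
  have hnonneg : 0 ≤ᵐ[volume.restrict (Set.uIoc 0 1)] fun t => P.eval t ^ 2 * (1 - t) ^ α := by
    rw [Set.uIoc_of_le zero_le_one]
    filter_upwards [ae_restrict_mem measurableSet_Ioc] with t ht
    have : 0 ≤ 1 - t := by linarith [ht.2]
    positivity
  rw [intervalIntegral.integral_pos_iff_support_of_nonneg_ae' hnonneg
    (intervalIntegrable_mul_one_sub_rpow hα
      (P.continuous.pow 2 : Continuous fun t => P.eval t ^ 2))]
  refine ⟨zero_lt_one, lt_of_lt_of_le ?_ (measure_mono hsupport)⟩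
  rw [measure_sdiff_null ((finite_setOfPred_isRoot hP).measure_zero _)]
  simp

lemma integral_jacQ_mul_pow_self_pos {α : ℝ} (hα : -1 < α) (p : ℕ) :
    0 < ∫ t in (0 : ℝ)..1, jacQ α 0 p t * t ^ p * (1 - t) ^ α := by
  have hαβ : -1 < α + 0 := by simpa using hα
  have hlead := leadingCoeff_jacobiPoly_pos hαβ p
  have hsq := integral_jacQ_mul_eval_of_natDegree_eq hα (natDegree_jacobiPoly hαβ p)
  have hpos := integral_eval_sq_mul_one_sub_rpow_pos hα (leadingCoeff_ne_zero.mp hlead.ne')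
  simp_rw [eval_jacobiPoly, ← sq] at hsq hpos
  rw [hsq] at hpos
  exact pos_of_mul_pos_right hpos hlead.le

lemma jacCoef_pos {α β : ℝ} (hα : -1 < α) (hβ : 0 ≤ β) (m : ℕ) : 0 < jacCoef α β m := by
  have hm : (0 : ℝ) ≤ m := Nat.cast_nonneg m
  have hΓ : ∀ x : ℝ, 0 < x → 0 < Real.Gamma x := fun x hx => Real.Gamma_pos_of_pos hx
  refine Real.sqrt_pos.mpr (div_pos (mul_pos (mul_pos (by linarith) (hΓ _ (by linarith)))
    (by positivity)) (mul_pos (hΓ _ (by linarith)) (hΓ _ (by linarith))))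

lemma gammaEnt_gSym (α : ℝ) (p : ℕ) (ξ : ℤ) (j k : ℕ) :
    gammaEnt α (gSym α p) ξ j k = ((jacCoef α ξ.natAbs j * jacCoef α ξ.natAbs k *
      ∫ t in (0 : ℝ)..1, jacQ α 0 p t *
        (jacobiPoly α ξ.natAbs j * jacobiPoly α ξ.natAbs k * X ^ ξ.natAbs).eval t *
          (1 - t) ^ α : ℝ) : ℂ) := by
  rw [gammaEnt, Complex.ofReal_mul _ (intervalIntegral _ _ _ _),
    ← intervalIntegral.integral_ofReal]
  congr 1
  refine intervalIntegral.integral_congr fun t ht => ?_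
  rw [Set.uIcc_of_le zero_le_one] at ht
  simp only [gSym, Real.sq_sqrt ht.1, eval_mul, eval_pow, eval_X, eval_jacobiPoly]
  push_cast
  ring

lemma natDegree_jacobiPoly_mul_jacobiPoly_mul_X_pow {α β : ℝ} (hαβ : -1 < α + β) (j k b : ℕ) :
    (jacobiPoly α β j * jacobiPoly α β k * X ^ b).natDegree = j + k + b := by
  have hj := leadingCoeff_ne_zero.mp (leadingCoeff_jacobiPoly_pos hαβ j).ne'
  have hk := leadingCoeff_ne_zero.mp (leadingCoeff_jacobiPoly_pos hαβ k).ne'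
  rw [natDegree_mul (mul_ne_zero hj hk) (pow_ne_zero _ X_ne_zero), natDegree_mul hj hk,
    natDegree_X_pow, natDegree_jacobiPoly hαβ, natDegree_jacobiPoly hαβ]

lemma leadingCoeff_jacobiPoly_mul_jacobiPoly_mul_X_pow_pos {α β : ℝ} (hαβ : -1 < α + β)
    (j k b : ℕ) :
    0 < (jacobiPoly α β j * jacobiPoly α β k * X ^ b).leadingCoeff := by
  rw [leadingCoeff_mul, leadingCoeff_mul, leadingCoeff_X_pow, mul_one]
  exact mul_pos (leadingCoeff_jacobiPoly_pos hαβ j) (leadingCoeff_jacobiPoly_pos hαβ k)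

lemma gammaEnt_gSym_eq_zero {α : ℝ} (hα : -1 < α) {p j k : ℕ} {ξ : ℤ}
    (h : j + k + ξ.natAbs < p) : gammaEnt α (gSym α p) ξ j k = 0 := by
  have hαβ : -1 < α + ξ.natAbs := by linarith [(Nat.cast_nonneg ξ.natAbs : (0 : ℝ) ≤ _)]
  rw [gammaEnt_gSym, integral_jacQ_mul_eval_eq_zero hα
    (by rwa [natDegree_jacobiPoly_mul_jacobiPoly_mul_X_pow hαβ]), mul_zero, Complex.ofReal_zero]

lemma gammaEnt_gSym_ne_zero {α : ℝ} (hα : -1 < α) {p j k : ℕ} {ξ : ℤ}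
    (h : j + k + ξ.natAbs = p) : gammaEnt α (gSym α p) ξ j k ≠ 0 := by
  have hβ : (0 : ℝ) ≤ ξ.natAbs := Nat.cast_nonneg _
  have hαβ : -1 < α + ξ.natAbs := by linarith
  rw [gammaEnt_gSym, integral_jacQ_mul_eval_of_natDegree_eq hα
    (by rw [natDegree_jacobiPoly_mul_jacobiPoly_mul_X_pow hαβ, h]), Complex.ofReal_ne_zero]
  exact (mul_pos (mul_pos (jacCoef_pos hα hβ j) (jacCoef_pos hα hβ k))
    (mul_pos (leadingCoeff_jacobiPoly_mul_jacobiPoly_mul_X_pow_pos hαβ j k _)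
      (integral_jacQ_mul_pow_self_pos hα p))).ne'

section MatrixUnits

open Matrix

variable {K : Type*} [Field K]

lemma Subalgebra.single_mem_of_col_entry_ne_zero {ι : Type*} [Fintype ι] [LinearOrder ι]
    {A : Subalgebra K (Matrix ι ι K)} {M : Matrix ι ι K} (hM : M ∈ A) {s e : ι}
    (he : single e e 1 ∈ A) (hzero : ∀ j < s, M j e = 0) (hne : M s e ≠ 0)
    (habove : ∀ j, s < j → single j e 1 ∈ A) : single s e 1 ∈ A := by
  have hcol : M * single e e 1 =
      M s e • single s e 1 + ∑ j ∈ univ.erase s, M j e • single j e 1 := by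
    rw [add_sum_erase _ (fun j => M j e • single j e (1 : K)) (mem_univ s)]
    ext a b
    simp [mul_apply, single_apply, Matrix.sum_apply, ite_and]
  have hrest : ∑ j ∈ univ.erase s, M j e • single j e 1 ∈ A := by
    refine sum_mem fun j hj => ?_
    rcases lt_or_gt_of_ne (ne_of_mem_erase hj) with hjs | hjs
    · rw [hzero j hjs, zero_smul]
      exact zero_mem A
    · exact A.smul_mem (habove j hjs) _
  have hsmul : M s e • single s e (1 : K) ∈ A := by
    rw [eq_sub_of_add_eq hcol.symm]
    exact sub_mem (mul_mem hM he) hrest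
  simpa [smul_smul, inv_mul_cancel₀ hne] using A.smul_mem hsmul (M s e)⁻¹

lemma Subalgebra.single_last_mem_of_antidiagonal {d : ℕ}
    {A : Subalgebra K (Matrix (Fin (d + 1)) (Fin (d + 1)) K)}
    {M : Matrix (Fin (d + 1)) (Fin (d + 1)) K}
    (hM : M ∈ A) (hzero : ∀ j k : Fin (d + 1), (j : ℕ) + k < d + d → M j k = 0)
    (hne : M (Fin.last d) (Fin.last d) ≠ 0) : single (Fin.last d) (Fin.last d) 1 ∈ A := by
  set c := M (Fin.last d) (Fin.last d) with hc
  have hM_eq : M = c • single (Fin.last d) (Fin.last d) 1 := by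
    ext a b
    by_cases hab : Fin.last d = a ∧ Fin.last d = b
    · obtain ⟨rfl, rfl⟩ := hab
      simp [hc]
    · have hlt : (a : ℕ) + b < d + d := by
        have ha := Fin.le_last a
        have hb := Fin.le_last b
        simp only [Fin.ext_iff, Fin.le_iff_val_le_val, Fin.val_last] at hab ha hb
        omega
      rw [hzero a b hlt, Matrix.smul_apply, single_apply, if_neg hab, smul_zero]
  have hmem := A.smul_mem hM c⁻¹
  rwa [hM_eq, smul_smul, inv_mul_cancel₀ hne, one_smul] at hmem

variable [StarRing K]

lemma StarSubalgebra.single_mem_of_antidiagonal_step {d : ℕ}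
    {A : StarSubalgebra K (Matrix (Fin (d + 1)) (Fin (d + 1)) K)}
    {M : Matrix (Fin (d + 1)) (Fin (d + 1)) K} (hM : M ∈ A) {s : Fin (d + 1)}
    (hzero : ∀ j < s, M j (Fin.last d) = 0) (hne : M s (Fin.last d) ≠ 0)
    (hcorner : single (Fin.last d) (Fin.last d) 1 ∈ A)
    (habove : ∀ j k, s < j → s < k → single j k 1 ∈ A) (j k : Fin (d + 1)) (hj : s ≤ j)
    (hk : s ≤ k) : single j k 1 ∈ A := by
  have hcol : single s (Fin.last d) (1 : K) ∈ A :=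
    Subalgebra.single_mem_of_col_entry_ne_zero (A := A.toSubalgebra) hM hcorner hzero hne
      fun j hj => habove j _ hj (hj.trans_le (Fin.le_last j))
  have hrow : single (Fin.last d) s (1 : K) ∈ A := by
    simpa [star_eq_conjTranspose] using star_mem hcol
  have hj_last : single j (Fin.last d) (1 : K) ∈ A := by
    rcases hj.lt_or_eq with hj | rfl
    · exact habove j _ hj (hj.trans_le (Fin.le_last j))
    · exact hcol
  have hlast_k : single (Fin.last d) k (1 : K) ∈ A := by
    rcases hk.lt_or_eq with hk | rfl
    · exact habove _ k (hk.trans_le (Fin.le_last k)) hk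
    · exact hrow
  simpa [single_mul_single_same] using mul_mem hj_last hlast_k

lemma StarSubalgebra.single_mem_of_antidiagonal {d : ℕ}
    {A : StarSubalgebra K (Matrix (Fin d) (Fin d) K)} {M : Fin d → Matrix (Fin d) (Fin d) K}
    (hM : ∀ q, M q ∈ A) (hzero : ∀ q j k : Fin d, (j : ℕ) + k < d - 1 + q → M q j k = 0)
    (hne : ∀ q j k : Fin d, (j : ℕ) + k = d - 1 + q → M q j k ≠ 0) (j k : Fin d) :
    single j k 1 ∈ A := by
  obtain ⟨d, rfl⟩ : ∃ d', d = d' + 1 := ⟨d - 1, by have := j.isLt; omega⟩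
  simp only [Nat.add_sub_cancel] at hzero hne
  have hcorner : single (Fin.last d) (Fin.last d) (1 : K) ∈ A :=
    Subalgebra.single_last_mem_of_antidiagonal (A := A.toSubalgebra) (hM _)
      (fun j k h => hzero _ j k (by rwa [Fin.val_last])) (hne _ _ _ rfl)
  have hstep : ∀ s : Fin (d + 1), (∀ j k, s < j → s < k → single j k (1 : K) ∈ A) →
      ∀ j k, s ≤ j → s ≤ k → single j k (1 : K) ∈ A := fun s habove =>
    StarSubalgebra.single_mem_of_antidiagonal_step (hM s)
      (fun j hj => hzero s j _ (by simp only [Fin.val_last]; omega))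
      (hne s s _ (by simp only [Fin.val_last]; omega)) hcorner habove
  have hall : ∀ s : Fin (d + 1), ∀ j k, s ≤ j → s ≤ k → single j k (1 : K) ∈ A :=
    Fin.reverseInduction (hstep _ fun j _ hj => absurd hj (Fin.le_last j).not_gt)
      fun i ih => hstep _ fun j k hj hk =>
        ih j k (Fin.castSucc_lt_iff_succ_le.mp hj) (Fin.castSucc_lt_iff_succ_le.mp hk)
  exact hall 0 j k (Fin.zero_le j) (Fin.zero_le k)

lemma StarSubalgebra.eq_top_of_single_mem {ι : Type*} [Fintype ι] [DecidableEq ι]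
    {A : StarSubalgebra K (Matrix ι ι K)} (h : ∀ i j, single i j 1 ∈ A) : A = ⊤ := by
  refine eq_top_iff.mpr fun M => ?_
  rw [matrix_eq_sum_single M]
  refine sum_mem fun i _ => sum_mem fun j _ => ?_
  simpa [smul_single] using A.smul_mem (h i j) (M i j)

end MatrixUnits

theorem statement11_general (n : ℕ) (α : ℝ) (hα : -1 < α) (ξ : ℤ)
    (hξ₂ : ξ ≤ -1) :
    StarAlgebra.adjoin ℂ
      {A : Matrix (Fin (dd n ξ)) (Fin (dd n ξ)) ℂ |
        ∃ q : Fin (dd n ξ), A = gammaMat n α (gSym α (n - 1 + (q : ℕ))) ξ} = ⊤ := by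
  have hdim : ∀ j : Fin (dd n ξ), dd n ξ - 1 + ξ.natAbs = n - 1 := by
    intro j
    have := j.isLt
    simp only [dd] at this ⊢
    omega
  refine StarSubalgebra.eq_top_of_single_mem <| StarSubalgebra.single_mem_of_antidiagonal
    (M := fun q => gammaMat n α (gSym α (n - 1 + q)) ξ)
    (fun q => StarAlgebra.subset_adjoin ℂ _ ⟨q, rfl⟩) (fun q j k h => ?_) (fun q j k h => ?_)
  · exact gammaEnt_gSym_eq_zero hα (by have := hdim j; omega)
  · exact gammaEnt_gSym_ne_zero hα (by have := hdim j; omega)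

/-- for `ξ ∈ {-n+1, …, -1}`, the matrices `γ(g_{n-1})_ξ, …, γ(g_{2n-2+ξ})_ξ`
generate the full matrix star-algebra `M_{n+ξ}(ℂ) = M_{d_ξ}(ℂ)`. -/
theorem statement11 (n : ℕ) (hn : 2 ≤ n) (α : ℝ) (hα : -1 < α) (ξ : ℤ)
    (hξ₁ : 1 - (n : ℤ) ≤ ξ) (hξ₂ : ξ ≤ -1) :
    StarAlgebra.adjoin ℂ
      {A : Matrix (Fin (dd n ξ)) (Fin (dd n ξ)) ℂ |
        ∃ q : Fin (dd n ξ), A = gammaMat n α (gSym α (n - 1 + (q : ℕ))) ξ} = ⊤ :=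
  statement11_general n α hα ξ hξ₂
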